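/- arXiv:1802.01847 — 7 statements merged into one kernel-verified Lean document; each statement's English description precedes it below -/
import Mathlib

section
/- Fix an integer r ≥ 2 and a real α > 1. Define h(x) := r⁻¹(α(1 - r⁻¹) + x)^r for x ≥ 0. Then x < h(x) for every x ≥ 0. -/
/-- `x < h x` for all `x ≥ 0`, where
`h x = r⁻¹ (α (1 - r⁻¹) + x)^r`, `r ≥ 2`, `α > 1`. -/
theorem stmt_2 (r : ℕ) (hr : 2 ≤ r) (α : ℝ) (hα : 1 < α) :
    ∀ x : ℝ, 0 ≤ x → x < (r : ℝ)⁻¹ * (α * (1 - (r : ℝ)⁻¹) + x) ^ r := by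
  intro x hx
  have hr2 : (2:ℝ) ≤ r := by exact_mod_cast hr
  have hr0 : (0:ℝ) < r := by linarith
  have hinv : (r:ℝ)⁻¹ ≤ 2⁻¹ := by
    apply inv_anti₀ <;> linarith
  have hinvpos : 0 < (r:ℝ)⁻¹ := by positivity
  have hmul : (r:ℝ) * (r:ℝ)⁻¹ = 1 := mul_inv_cancel₀ (ne_of_gt hr0)
  have hb : 0 < 1 - (r:ℝ)⁻¹ := by linarith
  have h1 : (r:ℝ) * x ≤ (1 - (r:ℝ)⁻¹ + x) ^ r := by
    have := one_add_mul_le_pow (a := x - (r:ℝ)⁻¹) (n := r) (by linarith)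
    have e1 : 1 + (x - (r:ℝ)⁻¹) = 1 - (r:ℝ)⁻¹ + x := by ring
    have e2 : 1 + (r:ℝ) * (x - (r:ℝ)⁻¹) = (r:ℝ) * x := by
      rw [mul_sub]; rw [hmul]; ring
    rw [e1, e2] at this
    exact this
  have h2 : (1 - (r:ℝ)⁻¹ + x) ^ r < (α * (1 - (r:ℝ)⁻¹) + x) ^ r := by
    apply pow_lt_pow_left₀ _ (by linarith) (by omega)
    nlinarith
  have : (r:ℝ) * x < (α * (1 - (r:ℝ)⁻¹) + x) ^ r := lt_of_le_of_lt h1 h2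
  calc x = (r:ℝ)⁻¹ * ((r:ℝ) * x) := by field_simp
    _ < (r:ℝ)⁻¹ * (α * (1 - (r:ℝ)⁻¹) + x) ^ r := by
        exact mul_lt_mul_of_pos_left this hinvpos
end

section
/- Fix an integer r ≥ 2 and α > 1. Define h(x) := r⁻¹(α(1-r⁻¹)+x)^r, H(x) := 1 - x + x log x for x > 0 with H(0) = 1, and J(x) := (r/(r-1)) h(x) H(x/h(x)) for x ≥ 0. Then J admits a unique point of minimum x₀ ∈ (0,∞) on [0,∞), and J(x₀) > 0. -/
open Real Set Filter Topology InformationTheory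

/-! With `c = α (1 - 1/r)` we have `h x = (c + x)^r / r`, and Bernoulli's inequality gives
`x < h x` on `[0, ∞)`; hence `J = (r/(r-1)) · h · klFun (x / h x)` is positive there, since
`klFun y = 1 - y + y log y` vanishes only at `y = 1`.

The perspective `F x = h x · klFun (x / h x)` has derivative `F' = h' (1 - x/h) + log (x/h)` and
`F'' = h'' (1 - x/h) + (1 - x h'/h)² / x > 0`, so `F'` is strictly increasing on `(0, ∞)`.
It tends to `-∞` at `0⁺` through `log (x / h x)` and is positive for large `x`, so by Darboux it
vanishes at some `x₀ > 0`; `F` strictly decreases on `[0, x₀]` and strictly increases after. -/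

lemma exists_forall_ne_lt_of_hasDerivAt_of_strictMonoOn {F D : ℝ → ℝ}
    (hF : ContinuousOn F (Ici 0)) (hFD : ∀ x > 0, HasDerivAt F (D x) x)
    (hD : StrictMonoOn D (Ioi 0)) {a b : ℝ} (ha : 0 < a) (hb : 0 < b)
    (hDa : D a < 0) (hDb : 0 < D b) :
    ∃ x₀ > 0, ∀ y ∈ Ici 0, y ≠ x₀ → F x₀ < F y := by
  have hab : a ≤ b := (hD.lt_iff_lt ha hb).1 (hDa.trans hDb) |>.le
  obtain ⟨x₀, ⟨hax₀, -⟩, hDx₀⟩ := exists_hasDerivWithinAt_eq_of_gt_of_lt hab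
    (fun x hx => (hFD x (ha.trans_le hx.1)).hasDerivWithinAt) hDa hDb
  have hx₀ : 0 < x₀ := ha.trans hax₀
  have hanti : StrictAntiOn F (Icc 0 x₀) := by
    refine strictAntiOn_of_hasDerivWithinAt_neg (f' := D) (convex_Icc 0 x₀)
      (hF.mono Icc_subset_Ici_self) (fun x hx => ?_) (fun x hx => ?_) <;>
      rw [interior_Icc] at hx
    · exact (hFD x hx.1).hasDerivWithinAt
    · exact hDx₀ ▸ hD hx.1 hx₀ hx.2
  have hmono : StrictMonoOn F (Ici x₀) := by
    refine strictMonoOn_of_hasDerivWithinAt_pos (f' := D) (convex_Ici x₀)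
      (hF.mono (Ici_subset_Ici.2 hx₀.le)) (fun x hx => ?_) (fun x hx => ?_) <;>
      rw [interior_Ici] at hx
    · exact (hFD x (hx₀.trans hx)).hasDerivWithinAt
    · exact hDx₀ ▸ hD hx₀ (hx₀.trans hx) hx
  refine ⟨x₀, hx₀, fun y hy hne => ?_⟩
  rcases hne.lt_or_gt with hlt | hgt
  · exact hanti ⟨hy, hlt.le⟩ ⟨hx₀.le, le_rfl⟩ hlt
  · exact hmono self_mem_Ici hgt.le hgt

section
variable {h h' h'' : ℝ → ℝ} {x : ℝ}

lemma hasDerivAt_mul_klFun_div (hx : 0 < x) (hhx : 0 < h x) (hh : HasDerivAt h (h' x) x) :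
    HasDerivAt (fun x => h x * klFun (x / h x)) (h' x * (1 - x / h x) + log (x / h x)) x := by
  have hy : HasDerivAt (fun x => x / h x) ((h x - x * h' x) / h x ^ 2) x :=
    ((hasDerivAt_id' x).div hh hhx.ne').congr_deriv (by ring)
  refine (hh.mul ((hasDerivAt_klFun (div_pos hx hhx).ne').comp x hy)).congr_deriv ?_
  simp only [Function.comp_apply, klFun_apply]
  field_simp
  ring

lemma hasDerivAt_mul_one_sub_div_add_log_div (hx : 0 < x) (hhx : 0 < h x)
    (hh : HasDerivAt h (h' x) x) (hh' : HasDerivAt h' (h'' x) x) :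
    HasDerivAt (fun x => h' x * (1 - x / h x) + log (x / h x))
      (h'' x * (1 - x / h x) + (1 - x * h' x / h x) ^ 2 / x) x := by
  have hy : HasDerivAt (fun x => x / h x) ((h x - x * h' x) / h x ^ 2) x :=
    ((hasDerivAt_id' x).div hh hhx.ne').congr_deriv (by ring)
  refine ((hh'.mul (hy.const_sub 1)).add (hy.log (div_pos hx hhx).ne')).congr_deriv ?_
  field_simp
  ring

lemma exists_pos_mul_one_sub_div_add_log_div_neg (hh : ContinuousAt h 0)
    (hh' : ContinuousAt h' 0) (h0 : 0 < h 0) :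
    ∃ a > 0, h' a * (1 - a / h a) + log (a / h a) < 0 := by
  have hy : ContinuousAt (fun x => x / h x) 0 := continuousAt_id.div hh h0.ne'
  have hy_tendsto : Tendsto (fun x => x / h x) (𝓝[>] 0) (𝓝[>] 0) := by
    refine tendsto_nhdsWithin_iff.2 ⟨by simpa using hy.tendsto.mono_left nhdsWithin_le_nhds, ?_⟩
    filter_upwards [self_mem_nhdsWithin, nhdsWithin_le_nhds (hh.eventually (lt_mem_nhds h0))]
      with x hx hhx using div_pos hx hhx
  have hfirst : ContinuousAt (fun x => h' x * (1 - x / h x)) 0 :=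
    hh'.mul (continuousAt_const.sub hy)
  have hlim : Tendsto (fun x => h' x * (1 - x / h x) + log (x / h x)) (𝓝[>] 0) atBot :=
    (hfirst.tendsto.mono_left nhdsWithin_le_nhds).add_atBot
      (tendsto_log_nhdsGT_zero.comp hy_tendsto)
  obtain ⟨a, hDa, ha⟩ :=
    ((hlim.eventually (eventually_lt_atBot 0)).and self_mem_nhdsWithin).exists
  exact ⟨a, ha, hDa⟩

end

lemma isMinOn_and_eq_of_forall_ne_lt {ι β : Type*} [Preorder β] {f : ι → β} {s : Set ι}
    {x₀ : ι} (hx₀ : x₀ ∈ s) (hf : ∀ y ∈ s, y ≠ x₀ → f x₀ < f y) :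
    IsMinOn f s x₀ ∧ ∀ y ∈ s, IsMinOn f s y → y = x₀ := by
  refine ⟨isMinOn_iff.2 fun y hy => ?_, fun y hy hy_min => ?_⟩
  · rcases eq_or_ne y x₀ with rfl | hne
    exacts [le_rfl, (hf y hy hne).le]
  · by_contra hne
    exact (hf y hy hne).not_ge (hy_min hx₀)

lemma klFun_pos {x : ℝ} (hx : 0 ≤ x) (hx1 : x ≠ 1) : 0 < klFun x :=
  (klFun_nonneg hx).lt_of_ne fun h => hx1 ((klFun_eq_zero_iff hx).1 h.symm)

theorem exists_forall_ne_lt_mul_klFun_div {h h' h'' : ℝ → ℝ}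
    (hh : ∀ x, HasDerivAt h (h' x) x) (hh' : ∀ x, HasDerivAt h' (h'' x) x)
    (hlt : ∀ x ≥ 0, x < h x) (hh'' : ∀ x > 0, 0 < h'' x) {b : ℝ} (hb : 0 < b)
    (hDb : 0 < h' b * (1 - b / h b) + log (b / h b)) :
    ∃ x₀ > 0, ∀ y ∈ Ici 0, y ≠ x₀ →
      h x₀ * klFun (x₀ / h x₀) < h y * klFun (y / h y) := by
  have hpos : ∀ x ≥ 0, 0 < h x := fun x hx => hx.trans_lt (hlt x hx)
  have hcont : Continuous h := continuous_iff_continuousAt.2 fun x => (hh x).continuousAt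
  have hD : ∀ x > 0, HasDerivAt (fun x => h' x * (1 - x / h x) + log (x / h x))
      (h'' x * (1 - x / h x) + (1 - x * h' x / h x) ^ 2 / x) x := fun x hx =>
    hasDerivAt_mul_one_sub_div_add_log_div hx (hpos x hx.le) (hh x) (hh' x)
  have hDmono : StrictMonoOn (fun x => h' x * (1 - x / h x) + log (x / h x)) (Ioi 0) := by
    refine strictMonoOn_of_hasDerivWithinAt_pos (convex_Ioi 0)
      (f' := fun x => h'' x * (1 - x / h x) + (1 - x * h' x / h x) ^ 2 / x)
      (fun x hx => (hD x hx).continuousAt.continuousWithinAt) (fun x hx => ?_)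
      (fun x hx => ?_) <;>
      rw [interior_Ioi] at hx
    · exact (hD x hx).hasDerivWithinAt
    · have hxh : 0 < 1 - x / h x := sub_pos.2 ((div_lt_one (hpos x hx.le)).2 (hlt x hx.le))
      exact add_pos_of_pos_of_nonneg (mul_pos (hh'' x hx) hxh)
        (div_nonneg (sq_nonneg _) (le_of_lt hx))
  obtain ⟨a, ha, hDa⟩ := exists_pos_mul_one_sub_div_add_log_div_neg (hh 0).continuousAt
    (hh' 0).continuousAt (hpos 0 le_rfl)
  refine exists_forall_ne_lt_of_hasDerivAt_of_strictMonoOn ?_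
    (fun x hx => hasDerivAt_mul_klFun_div hx (hpos x hx.le) (hh x)) hDmono ha hb hDa hDb
  exact hcont.continuousOn.mul (continuous_klFun.comp_continuousOn
    (continuousOn_id.div hcont.continuousOn fun x hx => (hpos x hx).ne'))

section
variable {r : ℕ} {c : ℝ}

lemma mul_lt_add_pow (hc : (r : ℝ) - 1 < r * c) {x : ℝ} (hx : 0 ≤ x) :
    r * x < (c + x) ^ r := by
  rcases r.eq_zero_or_pos with rfl | hr
  · simp
  have hc0 : 0 < c := pos_of_mul_pos_right (by linarith [(Nat.one_le_cast (α := ℝ)).2 hr])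
    (Nat.cast_nonneg r)
  calc (r : ℝ) * x < 1 + r * (c + x - 1) := by linarith
    _ ≤ (1 + (c + x - 1)) ^ r := one_add_mul_le_pow (by linarith) r
    _ = (c + x) ^ r := by ring

lemma hasDerivAt_inv_mul_add_pow (hr : r ≠ 0) (x : ℝ) :
    HasDerivAt (fun x => (r : ℝ)⁻¹ * (c + x) ^ r) ((c + x) ^ (r - 1)) x :=
  ((((hasDerivAt_id' x).const_add c).pow r).const_mul _).congr_deriv (by field_simp)

lemma add_pow_mul_one_sub_div_add_log_div_pos (hr : 2 ≤ r) (hc : 0 ≤ c) {b : ℝ}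
    (hcb : c ≤ b) (hrb : 2 * r ≤ b) :
    0 < (c + b) ^ (r - 1) * (1 - b / ((r : ℝ)⁻¹ * (c + b) ^ r)) +
      log (b / ((r : ℝ)⁻¹ * (c + b) ^ r)) := by
  have hr2 : (2 : ℝ) ≤ r := by exact_mod_cast hr
  set u := (c + b) ^ (r - 1) with hu_def
  have hcb1 : 1 ≤ c + b := by linarith
  have hu : c + b ≤ u := le_self_pow₀ hcb1 (by omega)
  have hupos : 0 < u := by linarith
  have hh : (r : ℝ)⁻¹ * (c + b) ^ r = (c + b) * u / r := by
    rw [hu_def, ← pow_succ', Nat.sub_add_cancel (by omega : 1 ≤ r)]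
    ring
  have hrb1 : 1 ≤ r * b / (c + b) := (one_le_div (by linarith)).2 (by nlinarith)
  have hfirst : u * (1 - b / ((c + b) * u / r)) = u - r * b / (c + b) := by
    field_simp
  have hlog : log (b / ((c + b) * u / r)) = log (r * b / (c + b)) - log u := by
    rw [← log_div (by positivity) hupos.ne']
    congr 1
    field_simp
  have hlog_u : log u < u / 2 := by
    have := log_le_sub_one_of_pos (half_pos hupos)
    rw [log_div hupos.ne' two_ne_zero] at this
    linarith [log_two_lt_d9]
  have hrb2 : r * b / (c + b) ≤ r := by
    rw [div_le_iff₀ (by linarith)]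
    nlinarith
  rw [hh, hfirst, hlog]
  linarith [log_nonneg hrb1]

end

/-- `J` admits a unique minimum point `x₀ ∈ (0,∞)` on `[0,∞)`,
and `J x₀ > 0`. Here `h x = r⁻¹ (α(1-r⁻¹)+x)^r` and
`J x = (r/(r-1)) h(x) H(x/h(x))` with `H y = 1 - y + y log y`
(note `Real.log 0 = 0`, so the formula also gives `H 0 = 1`). -/
theorem stmt_3 (r : ℕ) (hr : 2 ≤ r) (α : ℝ) (hα : 1 < α) (h J : ℝ → ℝ)
    (hh : ∀ x : ℝ, h x = (r : ℝ)⁻¹ * (α * (1 - (r : ℝ)⁻¹) + x) ^ r)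
    (hJ : ∀ x : ℝ, J x = ((r : ℝ) / ((r : ℝ) - 1)) * h x *
      (1 - x / h x + (x / h x) * Real.log (x / h x))) :
    ∃ x₀ : ℝ, 0 < x₀ ∧ IsMinOn J (Set.Ici 0) x₀ ∧ 0 < J x₀ ∧
      ∀ y ∈ Set.Ici (0 : ℝ), IsMinOn J (Set.Ici 0) y → y = x₀ := by
  have hr2 : (2 : ℝ) ≤ r := by exact_mod_cast hr
  set c := α * (1 - (r : ℝ)⁻¹) with hc_def
  have hc : (r : ℝ) - 1 < r * c := by
    have : (r : ℝ) * c = α * (r - 1) := by rw [hc_def]; field_simp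
    nlinarith
  have hc0 : 0 ≤ c := by nlinarith
  have hh_eq : h = fun x => (r : ℝ)⁻¹ * (c + x) ^ r := funext hh
  have hlt : ∀ x ≥ 0, x < h x := fun x hx => by
    rw [hh, inv_mul_eq_div, lt_div_iff₀ (by linarith), mul_comm]
    exact mul_lt_add_pow hc hx
  have hh'' : ∀ x > 0, 0 < ((r - 1 : ℕ) : ℝ) * (c + x) ^ (r - 1 - 1) * 1 := fun x hx => by
    simpa using mul_pos (Nat.cast_pos.2 (by omega : 0 < r - 1)) (pow_pos (by positivity) _)
  obtain ⟨x₀, hx₀, hlt₀⟩ := exists_forall_ne_lt_mul_klFun_div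
    (hh_eq ▸ hasDerivAt_inv_mul_add_pow (by omega))
    (fun x => ((hasDerivAt_id' x).const_add c).pow (r - 1)) hlt hh'' (b := c + 2 * r)
    (by positivity)
    (hh_eq ▸ add_pow_mul_one_sub_div_add_log_div_pos hr hc0 (by linarith) (by linarith))
  have hJ_eq : J = fun x => (r : ℝ) / (r - 1) * (h x * klFun (x / h x)) :=
    funext fun x => by rw [hJ, klFun_apply]; ring
  have hC : 0 < (r : ℝ) / (r - 1) := div_pos (by linarith) (by linarith)
  have hJlt : ∀ y ∈ Ici 0, y ≠ x₀ → J x₀ < J y := fun y hy hne => by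
    rw [hJ_eq]
    exact mul_lt_mul_of_pos_left (hlt₀ y hy hne) hC
  obtain ⟨hmin, huniq⟩ := isMinOn_and_eq_of_forall_ne_lt (mem_Ici.2 hx₀.le) hJlt
  have hpos : 0 < h x₀ := hx₀.trans (hlt x₀ hx₀.le)
  refine ⟨x₀, hx₀, hmin, ?_, huniq⟩
  rw [hJ_eq]
  exact mul_pos hC (mul_pos hpos (klFun_pos (div_pos hx₀ hpos).le
    ((div_lt_one hpos).2 (hlt x₀ hx₀.le)).ne))
end

section
/- Let X ~ Bin(n, p) with mean μ = np. If 0 < k < n and k ≥ e²μ, then P(X ≥ k) ≤ exp(-(k/2) log(k/μ)). -/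
/-!
The union bound over the `k`-subsets of trials gives `P(X ≥ k) ≤ C(n,k) p^k`, and
`C(n,k) ≤ n^k / k! ≤ (e n / k)^k` turns this into `(e μ / k)^k = exp (-k (log (k/μ) - 1))`.
Since `k ≥ e² μ` means `log (k/μ) ≥ 2`, we have `log (k/μ) - 1 ≥ log (k/μ) / 2`.
-/

open Finset

/-- The probability that a `Bin(m,p)` random variable equals `i`. -/
noncomputable def binomialP (m : ℕ) (p : ℝ) (i : ℕ) : ℝ :=
  (m.choose i : ℝ) * p ^ i * (1 - p) ^ (m - i)

/-- `P(Bin(m,p) ≥ k)`. -/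
noncomputable def binomTail (m : ℕ) (p : ℝ) (k : ℕ) : ℝ :=
  ∑ i ∈ Finset.Icc k m, binomialP m p i

open Real

lemma Nat.choose_add_le_choose_mul_choose (n k j : ℕ) :
    n.choose (k + j) ≤ n.choose k * (n - k).choose j := by
  have h := Nat.choose_mul (n := n) (Nat.le_add_right k j)
  rw [Nat.add_sub_cancel_left] at h
  exact h ▸ Nat.le_mul_of_pos_right _ (Nat.choose_pos (Nat.le_add_right k j))

lemma sum_binomialP_eq_one (m : ℕ) (p : ℝ) : ∑ i ∈ range (m + 1), binomialP m p i = 1 := by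
  have h := add_pow p (1 - p) m
  rw [add_sub_cancel, one_pow] at h
  rw [h]
  exact sum_congr rfl fun i _ => by unfold binomialP; ring

lemma binomialP_add_le {p : ℝ} (hp : 0 ≤ p) (hp1 : p ≤ 1) (n k j : ℕ) :
    binomialP n p (k + j) ≤ n.choose k * p ^ k * binomialP (n - k) p j := by
  have hchoose : (n.choose (k + j) : ℝ) ≤ n.choose k * (n - k).choose j := by
    exact_mod_cast Nat.choose_add_le_choose_mul_choose n k j
  calc binomialP n p (k + j)
      ≤ n.choose k * (n - k).choose j * p ^ (k + j) * (1 - p) ^ (n - (k + j)) := by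
        unfold binomialP
        gcongr
    _ = n.choose k * p ^ k * binomialP (n - k) p j := by
        rw [binomialP, pow_add, Nat.sub_add_eq]
        ring

lemma binomTail_le_choose_mul_pow {n k : ℕ} {p : ℝ} (hp : 0 ≤ p) (hp1 : p ≤ 1) (hkn : k ≤ n) :
    binomTail n p k ≤ n.choose k * p ^ k := by
  calc binomTail n p k = ∑ j ∈ range (n - k + 1), binomialP n p (k + j) := by
        rw [binomTail, ← Ico_add_one_right_eq_Icc, sum_Ico_eq_sum_range, Nat.sub_add_comm hkn]
    _ ≤ ∑ j ∈ range (n - k + 1), n.choose k * p ^ k * binomialP (n - k) p j :=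
        sum_le_sum fun j _ => binomialP_add_le hp hp1 n k j
    _ = n.choose k * p ^ k := by rw [← mul_sum, sum_binomialP_eq_one, mul_one]

lemma choose_mul_pow_le_exp_one_mul_div_pow (n k : ℕ) {p : ℝ} (hp : 0 ≤ p) :
    n.choose k * p ^ k ≤ (exp 1 * (n * p) / k) ^ k := by
  rcases k.eq_zero_or_pos with rfl | hk
  · simp
  have hk' : (0 : ℝ) < k := by exact_mod_cast hk
  have hfact : (k ^ k : ℝ) ≤ exp 1 ^ k * k.factorial := by
    rw [← exp_nat_mul, mul_one, ← div_le_iff₀ (by positivity)]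
    exact pow_div_factorial_le_exp _ hk'.le k
  calc n.choose k * p ^ k ≤ (n : ℝ) ^ k / k.factorial * p ^ k := by
        gcongr
        exact Nat.choose_le_pow_div k n
    _ = (n * p) ^ k / k.factorial := by rw [mul_pow]; ring
    _ ≤ (n * p) ^ k * exp 1 ^ k / k ^ k := by
        rw [div_le_div_iff₀ (by positivity) (by positivity), mul_assoc]
        exact mul_le_mul_of_nonneg_left hfact (by positivity)
    _ = (exp 1 * (n * p) / k) ^ k := by rw [div_pow, mul_pow]; ring

lemma exp_one_div_pow_le_of_exp_two_le {x : ℝ} (hx : exp 2 ≤ x) (k : ℕ) :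
    (exp 1 / x) ^ k ≤ exp (-(k / 2 * log x)) := by
  have hx0 : 0 < x := (exp_pos 2).trans_le hx
  have hlog : 2 ≤ log x := by simpa using log_le_log (exp_pos 2) hx
  calc (exp 1 / x) ^ k = exp (k * (1 - log x)) := by
        rw [exp_nat_mul, exp_sub, exp_log hx0]
    _ ≤ exp (-(k / 2 * log x)) := by
        gcongr
        nlinarith [k.cast_nonneg (α := ℝ)]

theorem stmt_7_general (n k : ℕ) (p : ℝ) (hp : 0 < p) (hp1 : p < 1)
    (hkn : k < n)
    (hkμ : Real.exp 2 * ((n : ℝ) * p) ≤ k) :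
    binomTail n p k ≤
      Real.exp (-(((k : ℝ) / 2) * Real.log ((k : ℝ) / ((n : ℝ) * p)))) := by
  have hμ : 0 < (n : ℝ) * p := mul_pos (by exact_mod_cast k.zero_le.trans_lt hkn) hp
  have hx : exp 2 ≤ k / (n * p) := (le_div_iff₀ hμ).2 hkμ
  calc binomTail n p k ≤ n.choose k * p ^ k := binomTail_le_choose_mul_pow hp.le hp1.le hkn.le
    _ ≤ (exp 1 * (n * p) / k) ^ k := choose_mul_pow_le_exp_one_mul_div_pow n k hp.le
    _ = (exp 1 / (k / (n * p))) ^ k := by rw [div_div_eq_mul_div]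
    _ ≤ _ := exp_one_div_pow_le_of_exp_two_le hx k

/-- if `0 < k < n` and `k ≥ e² μ` with `μ = np`, then
`P(Bin(n,p) ≥ k) ≤ exp(-(k/2) log(k/μ))`. -/
theorem stmt_7 (n k : ℕ) (p : ℝ) (hp : 0 < p) (hp1 : p < 1)
    (hk0 : 0 < k) (hkn : k < n)
    (hkμ : Real.exp 2 * ((n : ℝ) * p) ≤ k) :
    binomTail n p k ≤
      Real.exp (-(((k : ℝ) / 2) * Real.log ((k : ℝ) / ((n : ℝ) * p)))) :=
  stmt_7_general n k p hp hp1 hkn hkμ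
end

section
/- Let {q_n} ⊂ (0,1), {m_n} ⊂ [1,∞), {r_n} ⊂ ℕ with q_n → 0, r_n → ∞, r_n/(q_n m_n) → ∞, r_n/m_n → 0, and such that lim q_n m_n exists in [0,∞]. Then log P(Bin(⌊m_n⌋, q_n) ≥ r_n) = r_n log(m_n q_n / r_n)(1 + o(1)) as n → ∞. -/
/-!
With `M = ⌊m⌋`, `R = r` and `x = m q / R → 0`, the tail lies between its first term and the
union bound over the `R`-subsets of the trials:
`C(M,R) q^R (1-q)^(M-R) ≤ P(Bin(M,q) ≥ R) ≤ C(M,R) q^R`.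
With `(M/(2R))^R ≤ C(M,R) ≤ (e M/R)^R` and `log (1-q) ≥ -2q` this gives
`|log P - R log x| ≤ R (1 + log 4 + 2x)`, which is `o(R |log x|)` since `log x → -∞`.
-/

open Filter

open Real Topology

section Binomial

variable {M R i : ℕ} {q : ℝ}

lemma binomialP_nonneg (h0 : 0 ≤ q) (h1 : q ≤ 1) : 0 ≤ binomialP M q i := by
  have : 0 ≤ 1 - q := by linarith
  unfold binomialP
  positivity

lemma sum_range_binomialP (M : ℕ) (q : ℝ) :
    ∑ i ∈ Finset.range (M + 1), binomialP M q i = 1 := by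
  have h := (add_pow q (1 - q) M).symm
  rw [add_sub_cancel, one_pow] at h
  rw [← h]
  exact Finset.sum_congr rfl fun i _ => by unfold binomialP; ring

lemma binomialP_le_binomTail (h0 : 0 ≤ q) (h1 : q ≤ 1) (hRM : R ≤ M) :
    binomialP M q R ≤ binomTail M q R :=
  Finset.single_le_sum (f := binomialP M q) (fun _ _ => binomialP_nonneg h0 h1)
    (Finset.mem_Icc.2 ⟨le_rfl, hRM⟩)

lemma choose_le_choose_mul_choose_sub (hRi : R ≤ i) :
    M.choose i ≤ M.choose R * (M - R).choose (i - R) := by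
  rw [← Nat.choose_mul hRi]
  exact Nat.le_mul_of_pos_right _ (Nat.choose_pos hRi)

lemma binomialP_le_mul_binomialP_sub (h0 : 0 ≤ q) (h1 : q ≤ 1) (hRi : R ≤ i) (hiM : i ≤ M) :
    binomialP M q i ≤ M.choose R * q ^ R * binomialP (M - R) q (i - R) := by
  have hchoose : (M.choose i : ℝ) ≤ M.choose R * (M - R).choose (i - R) := by
    exact_mod_cast choose_le_choose_mul_choose_sub hRi
  have hpow : q ^ i = q ^ R * q ^ (i - R) := by rw [← pow_add, Nat.add_sub_cancel' hRi]
  have hexp : M - i = M - R - (i - R) := by omega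
  have : 0 ≤ 1 - q := by linarith
  unfold binomialP
  rw [hpow, hexp]
  calc (M.choose i : ℝ) * (q ^ R * q ^ (i - R)) * (1 - q) ^ (M - R - (i - R))
      ≤ M.choose R * (M - R).choose (i - R) * (q ^ R * q ^ (i - R)) *
          (1 - q) ^ (M - R - (i - R)) := by gcongr
    _ = _ := by ring

lemma binomTail_le_choose_mul_pow_s9 (h0 : 0 ≤ q) (h1 : q ≤ 1) (hRM : R ≤ M) :
    binomTail M q R ≤ M.choose R * q ^ R := by
  have hsum : ∑ i ∈ Finset.Icc R M, binomialP (M - R) q (i - R) = 1 := by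
    rw [← Finset.Ico_add_one_right_eq_Icc, Finset.sum_Ico_eq_sum_range,
      Nat.sub_add_comm hRM, ← sum_range_binomialP (M - R) q]
    simp only [Nat.add_sub_cancel_left]
  calc binomTail M q R
      ≤ ∑ i ∈ Finset.Icc R M, M.choose R * q ^ R * binomialP (M - R) q (i - R) :=
        Finset.sum_le_sum fun i hi =>
          binomialP_le_mul_binomialP_sub h0 h1 (Finset.mem_Icc.1 hi).1 (Finset.mem_Icc.1 hi).2
    _ = M.choose R * q ^ R := by rw [← Finset.mul_sum, hsum, mul_one]

lemma choose_le_exp_mul_div_pow (M R : ℕ) : (M.choose R : ℝ) ≤ (exp 1 * M / R) ^ R := by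
  have hRR : (0 : ℝ) < (R : ℝ) ^ R := by
    rcases R.eq_zero_or_pos with rfl | hR
    · simp
    · positivity
  have hexp : (R : ℝ) ^ R / R.factorial ≤ exp 1 ^ R := by
    rw [← exp_nat_mul, mul_one]
    exact pow_div_factorial_le_exp _ (Nat.cast_nonneg R) R
  calc (M.choose R : ℝ) ≤ (M : ℝ) ^ R / R.factorial := Nat.choose_le_pow_div R M
    _ = (M : ℝ) ^ R / (R : ℝ) ^ R * ((R : ℝ) ^ R / R.factorial) := by field_simp
    _ ≤ (M : ℝ) ^ R / (R : ℝ) ^ R * exp 1 ^ R := by gcongr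
    _ = (exp 1 * M / R) ^ R := by rw [div_pow, mul_pow]; ring

lemma div_two_mul_pow_le_choose (h : 2 * R ≤ M) : ((M : ℝ) / (2 * R)) ^ R ≤ M.choose R := by
  have hfac : (R.factorial : ℝ) ≤ (R : ℝ) ^ R := by exact_mod_cast Nat.factorial_le_pow R
  have hbase : (M : ℝ) / 2 ≤ (M + 1 - R : ℕ) := by
    rw [Nat.cast_sub (by omega)]
    push_cast
    have : (2 * R : ℝ) ≤ M := by exact_mod_cast h
    linarith
  calc ((M : ℝ) / (2 * R)) ^ R = ((M : ℝ) / 2) ^ R / (R : ℝ) ^ R := by rw [← div_pow, div_div]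
    _ ≤ ((M + 1 - R : ℕ) : ℝ) ^ R / R.factorial := by gcongr
    _ ≤ M.choose R := Nat.pow_le_choose R M

lemma binomTail_le_pow (h0 : 0 ≤ q) (h1 : q ≤ 1) (hRM : R ≤ M) :
    binomTail M q R ≤ (exp 1 * M * q / R) ^ R :=
  calc binomTail M q R ≤ M.choose R * q ^ R := binomTail_le_choose_mul_pow_s9 h0 h1 hRM
    _ ≤ (exp 1 * M / R) ^ R * q ^ R := by gcongr; exact choose_le_exp_mul_div_pow M R
    _ = (exp 1 * M * q / R) ^ R := by rw [← mul_pow]; ring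

lemma pow_mul_pow_le_binomTail (h0 : 0 ≤ q) (h1 : q ≤ 1) (h : 2 * R ≤ M) :
    (M * q / (2 * R)) ^ R * (1 - q) ^ M ≤ binomTail M q R := by
  have : 0 ≤ 1 - q := by linarith
  refine le_trans ?_ (binomialP_le_binomTail h0 h1 (by omega))
  calc (M * q / (2 * R)) ^ R * (1 - q) ^ M = (M / (2 * R)) ^ R * q ^ R * (1 - q) ^ M := by
        rw [mul_div_right_comm, mul_pow]
    _ ≤ M.choose R * q ^ R * (1 - q) ^ (M - R) := by
        gcongr ?_ * _ * ?_
        · exact div_two_mul_pow_le_choose h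
        · exact pow_le_pow_of_le_one this (by linarith) (Nat.sub_le M R)

end Binomial

lemma neg_two_mul_le_log_one_sub {q : ℝ} (h0 : 0 ≤ q) (h1 : q ≤ 1 / 2) :
    -(2 * q) ≤ log (1 - q) := by
  have hpos : 0 < 1 - q := by linarith
  have hinv : (1 - q)⁻¹ ≤ 1 + 2 * q := by
    rw [inv_le_iff_one_le_mul₀ hpos]
    nlinarith
  linarith [one_sub_inv_le_log_of_pos hpos]

lemma abs_log_binomTail_floor_sub_le {m q : ℝ} {R : ℕ} (hq : 0 < q) (hq2 : q ≤ 1 / 2)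
    (hR : 1 ≤ R) (hRm : 4 * R ≤ m) :
    |log (binomTail ⌊m⌋₊ q R) - R * log (m * q / R)| ≤ R * (1 + log 4 + 2 * (m * q / R)) := by
  set M := ⌊m⌋₊
  have hRpos : (0 : ℝ) < R := by exact_mod_cast hR
  have hm : 1 ≤ m := by linarith [(Nat.one_le_cast (α := ℝ)).2 hR]
  have hMm : (M : ℝ) ≤ m := Nat.floor_le (by linarith)
  have hmM : m / 2 < M := Nat.div_two_lt_floor hm
  have hMpos : (0 : ℝ) < M := by linarith
  have h2RM : 2 * R ≤ M := by
    have : ((2 * R : ℕ) : ℝ) < M := by push_cast; linarith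
    exact_mod_cast this.le
  have h1q : 0 < 1 - q := by linarith
  set x := m * q / R with hx
  have hxpos : 0 < x := by positivity
  have hlower := pow_mul_pow_le_binomTail hq.le (by linarith) h2RM
  have hPpos : 0 < binomTail M q R := lt_of_lt_of_le (by positivity) hlower
  have hupper : log (binomTail M q R) ≤ R * (1 + log x) := by
    have hbase : exp 1 * M * q / R ≤ exp 1 * x := by
      rw [mul_assoc, mul_div_assoc, hx]
      gcongr
    calc log (binomTail M q R) ≤ log ((exp 1 * M * q / R) ^ R) :=
          log_le_log hPpos (binomTail_le_pow hq.le (by linarith) (by omega))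
      _ ≤ log ((exp 1 * x) ^ R) := by gcongr
      _ = R * (1 + log x) := by rw [log_pow, log_mul (exp_pos 1).ne' hxpos.ne', log_exp]
  have hlower' : R * (log x - log 4) - 2 * (m * q) ≤ log (binomTail M q R) := by
    have hbase : x / 4 ≤ M * q / (2 * R) := by
      rw [hx, div_div, div_le_div_iff₀ (by positivity) (by positivity)]
      nlinarith [mul_pos hq hRpos]
    have hlog1q := neg_two_mul_le_log_one_sub hq.le hq2
    calc R * (log x - log 4) - 2 * (m * q) ≤ R * log (M * q / (2 * R)) + M * log (1 - q) := by
          rw [← log_div hxpos.ne' (by norm_num)]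
          have : log (x / 4) ≤ log (M * q / (2 * R)) := log_le_log (by positivity) hbase
          nlinarith
      _ = log ((M * q / (2 * R)) ^ R * (1 - q) ^ M) := by
          rw [log_mul (by positivity) (by positivity), log_pow, log_pow]
      _ ≤ log (binomTail M q R) := log_le_log (by positivity) hlower
  have hexpand : R * (1 + log 4 + 2 * x) = R + R * log 4 + 2 * (m * q) := by
    rw [hx]; field_simp
  have hlog4 : 0 < R * log 4 := mul_pos hRpos (log_pos (by norm_num))
  rw [abs_le, hexpand]
  constructor <;> nlinarith

lemma tendsto_div_mul_of_abs_sub_le_mul {α : Type*} {l : Filter α} {A R L e : α → ℝ} {c : ℝ}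
    (hL : Tendsto L l atBot) (he : Tendsto e l (𝓝 c)) (hR : ∀ᶠ n in l, 0 < R n)
    (h : ∀ᶠ n in l, |A n - R n * L n| ≤ R n * e n) :
    Tendsto (fun n => A n / (R n * L n)) l (𝓝 1) := by
  have hdecay : Tendsto (fun n => e n / -L n) l (𝓝 0) :=
    he.div_atTop (tendsto_neg_atBot_atTop.comp hL)
  refine tendsto_sub_nhds_zero_iff.1 (squeeze_zero_norm' ?_ hdecay)
  filter_upwards [hR, h, hL.eventually_lt_atBot 0] with n hRn hn hLn
  have hRL : R n * L n < 0 := mul_neg_of_pos_of_neg hRn hLn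
  rw [Real.norm_eq_abs, div_sub_one hRL.ne, abs_div, abs_of_neg hRL,
    div_le_div_iff₀ (by linarith) (by linarith)]
  nlinarith

theorem stmt_9_general (q m : ℕ → ℝ) (r : ℕ → ℕ)
    (hq : ∀ n, q n ∈ Set.Ioo (0 : ℝ) 1) (hm : ∀ n, 1 ≤ m n)
    (hq0 : Tendsto q atTop (nhds 0))
    (hr : Tendsto (fun n => (r n : ℝ)) atTop atTop)
    (hrqm : Tendsto (fun n => (r n : ℝ) / (q n * m n)) atTop atTop)
    (hrm : Tendsto (fun n => (r n : ℝ) / m n) atTop (nhds 0)) :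
    Tendsto (fun n =>
        Real.log (binomTail ⌊m n⌋₊ (q n) (r n)) /
          ((r n : ℝ) * Real.log (m n * q n / (r n : ℝ))))
      atTop (nhds 1) := by
  have hx : Tendsto (fun n => m n * q n / r n) atTop (𝓝 0) := by
    refine hrqm.inv_tendsto_atTop.congr fun n => ?_
    simp only [Pi.inv_apply, inv_div, mul_comm]
  have hr1 : ∀ᶠ n in atTop, 1 ≤ r n := by
    simpa only [Nat.one_le_cast] using hr.eventually_ge_atTop 1
  have hxpos : ∀ᶠ n in atTop, 0 < m n * q n / r n := by
    filter_upwards [hr1] with n hn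
    have := (hq n).1
    have := hm n
    positivity
  have hL : Tendsto (fun n => log (m n * q n / r n)) atTop atBot :=
    tendsto_log_nhdsGT_zero.comp (tendsto_nhdsWithin_iff.2 ⟨hx, hxpos⟩)
  refine tendsto_div_mul_of_abs_sub_le_mul hL ((hx.const_mul 2).const_add (1 + log 4))
    (hr.eventually_gt_atTop 0) ?_
  filter_upwards [hr1, hrm.eventually_lt_const (by norm_num : (0 : ℝ) < 1 / 4),
    hq0.eventually_le_const (by norm_num : (0 : ℝ) < 1 / 2)] with n hn hrmn hqn
  have hRm : 4 * (r n : ℝ) ≤ m n := by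
    rw [div_lt_iff₀ (by linarith [hm n])] at hrmn
    linarith
  exact abs_log_binomTail_floor_sub_le (hq n).1 hqn hn hRm

/-- under the stated conditions,
`log P(Bin(⌊m_n⌋, q_n) ≥ r_n) = r_n log(m_n q_n / r_n)(1 + o(1))`,
i.e. the ratio of the two sides tends to `1`. -/
theorem stmt_9 (q m : ℕ → ℝ) (r : ℕ → ℕ)
    (hq : ∀ n, q n ∈ Set.Ioo (0 : ℝ) 1) (hm : ∀ n, 1 ≤ m n)
    (hq0 : Tendsto q atTop (nhds 0))
    (hr : Tendsto (fun n => (r n : ℝ)) atTop atTop)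
    (hrqm : Tendsto (fun n => (r n : ℝ) / (q n * m n)) atTop atTop)
    (hrm : Tendsto (fun n => (r n : ℝ) / m n) atTop (nhds 0))
    (hlim : ∃ L : EReal, Tendsto (fun n => ((q n * m n : ℝ) : EReal)) atTop (nhds L)) :
    Tendsto (fun n =>
        Real.log (binomTail ⌊m n⌋₊ (q n) (r n)) /
          ((r n : ℝ) * Real.log (m n * q n / (r n : ℝ))))
      atTop (nhds 1) :=
  stmt_9_general q m r hq hm hq0 hr hrqm hrm
end

section
/- Let {a_n} ⊂ ℕ with a_n = o(n), let {π(n)} ⊂ (0,1) and {v(n)} ⊂ (0,∞) be sequences with v(n) = o(n), v(n) → ∞, and nπ(n)/v(n) → 1. Then for every θ ∈ ℝ, (1/v(n)) log E[exp(θ · Bin(n - a_n, π(n)))] → e^θ - 1 as n → ∞. -/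
/-!
The moment generating function is `(1 + π (e^θ - 1))^(n - a_n)`, so the normalized logarithm
factors as `((n - a_n) π / v) · (log (1 + π c) / π)` with `c = e^θ - 1`. The first factor tends
to `1` because `a_n = o(n)` and `n π / v → 1`; and since `π = (n π / v) (v / n) → 0`, the second
tends to the derivative `c` of `x ↦ log (1 + x c)` at `0`.
-/

open Filter Topology

/-- `E[exp(θ · Bin(m,p))]`. -/
noncomputable def binomMGF (m : ℕ) (p : ℝ) (θ : ℝ) : ℝ :=
  ∑ i ∈ Finset.range (m + 1), binomialP m p i * Real.exp (θ * i)

theorem binomMGF_eq_pow (m : ℕ) (p θ : ℝ) :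
    binomMGF m p θ = (1 + p * (Real.exp θ - 1)) ^ m := by
  rw [show 1 + p * (Real.exp θ - 1) = p * Real.exp θ + (1 - p) by ring, add_pow]
  refine Finset.sum_congr rfl fun i _ => ?_
  rw [binomialP, mul_comm θ, Real.exp_nat_mul, mul_pow]
  ring

theorem tendsto_log_one_add_mul_div_self (c : ℝ) :
    Tendsto (fun x => Real.log (1 + x * c) / x) (𝓝[≠] 0) (𝓝 c) := by
  have hderiv : HasDerivAt (fun x => Real.log (1 + x * c)) c 0 := by
    simpa using (((hasDerivAt_id (0 : ℝ)).mul_const c).const_add 1).log (by simp)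
  simpa [div_eq_inv_mul] using hderiv.tendsto_slope_zero

section

variable {α : Type*} {l : Filter α}

theorem tendsto_nhdsNE_zero_of_tendsto_mul_div {u p v : α → ℝ}
    (h : Tendsto (fun x => u x * p x / v x) l (𝓝 1))
    (hvu : Tendsto (fun x => v x / u x) l (𝓝 0)) :
    Tendsto p l (𝓝[≠] 0) := by
  have hne : ∀ᶠ x in l, u x ≠ 0 ∧ p x ≠ 0 ∧ v x ≠ 0 := by
    filter_upwards [h.eventually_ne one_ne_zero] with x hx
    simpa [and_assoc] using hx
  refine tendsto_nhdsWithin_iff.mpr ⟨?_, hne.mono fun x hx => hx.2.1⟩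
  have hprod := h.mul hvu
  rw [mul_zero] at hprod
  refine hprod.congr' (hne.mono fun x ⟨hu, _, hv⟩ => ?_)
  field_simp

theorem tendsto_mul_log_one_add_mul_div {m p v : α → ℝ} (c : ℝ)
    (hp : Tendsto p l (𝓝[≠] 0)) (h : Tendsto (fun x => m x * p x / v x) l (𝓝 1)) :
    Tendsto (fun x => m x * Real.log (1 + p x * c) / v x) l (𝓝 c) := by
  have hprod := h.mul ((tendsto_log_one_add_mul_div_self c).comp hp)
  rw [one_mul] at hprod
  refine hprod.congr' ((eventually_mem_of_tendsto_nhdsWithin hp).mono fun x hx => ?_)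
  simp only [Function.comp_apply]
  field_simp [Set.mem_compl_singleton_iff.mp hx]

end

theorem eventually_le_of_tendsto_div_zero {a : ℕ → ℕ}
    (ha : Tendsto (fun n => (a n : ℝ) / n) atTop (𝓝 0)) : ∀ᶠ n in atTop, a n ≤ n := by
  filter_upwards [ha.eventually (gt_mem_nhds one_pos), eventually_gt_atTop 0] with n h hn
  have hn' : (0 : ℝ) < n := by exact_mod_cast hn
  exact_mod_cast ((div_lt_one hn').mp h).le

theorem stmt_10_general (a : ℕ → ℕ) (π v : ℕ → ℝ)
    (ha : Tendsto (fun n => (a n : ℝ) / (n : ℝ)) atTop (nhds 0))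
    (hvn : Tendsto (fun n => v n / (n : ℝ)) atTop (nhds 0))
    (hπv : Tendsto (fun n : ℕ => (n : ℝ) * π n / v n) atTop (nhds 1)) :
    ∀ θ : ℝ, Tendsto
      (fun n => (1 / v n) * Real.log (binomMGF (n - a n) (π n) θ))
      atTop (nhds (Real.exp θ - 1)) := by
  intro θ
  have htrials : Tendsto (fun n => ((n - a n : ℕ) : ℝ) * π n / v n) atTop (𝓝 1) := by
    have h := (tendsto_const_nhds (x := (1 : ℝ))).sub ha |>.mul hπv
    rw [sub_zero, one_mul] at h
    refine h.congr' ?_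
    filter_upwards [eventually_le_of_tendsto_div_zero ha, eventually_ne_atTop 0] with n hle hn
    rw [Nat.cast_sub hle]
    field_simp
  refine (tendsto_mul_log_one_add_mul_div _
    (tendsto_nhdsNE_zero_of_tendsto_mul_div hπv hvn) htrials).congr fun n => ?_
  rw [binomMGF_eq_pow, Real.log_pow]
  ring

/-- normalized log-moment generating function of
`Bin(n - a_n, π(n))` converges to `e^θ - 1`. -/
theorem stmt_10 (a : ℕ → ℕ) (π v : ℕ → ℝ)
    (ha : Tendsto (fun n => (a n : ℝ) / (n : ℝ)) atTop (nhds 0))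
    (hπ : ∀ n, π n ∈ Set.Ioo (0 : ℝ) 1)
    (hv : ∀ n, 0 < v n)
    (hvn : Tendsto (fun n => v n / (n : ℝ)) atTop (nhds 0))
    (hvinf : Tendsto v atTop atTop)
    (hπv : Tendsto (fun n : ℕ => (n : ℝ) * π n / v n) atTop (nhds 1)) :
    ∀ θ : ℝ, Tendsto
      (fun n => (1 / v n) * Real.log (binomMGF (n - a n) (π n) θ))
      atTop (nhds (Real.exp θ - 1)) :=
  stmt_10_general a π v ha hvn hπv
end

section
/- Let {a_n} ⊂ ℕ with a_n = o(n), and let {π(n)} ⊂ (0,1), {v(n)} ⊂ (0,∞) with v(n) = o(n), v(n) → ∞, and nπ(n) ∼ v(n) (ratio tending to 1). Then the sequence {Bin(n - a_n, π(n))/v(n)} satisfies a large deviation principle on ℝ with speed v(n) and rate function H, where H(x) = 1 - x + x log x for x > 0, H(0) = 1, H(x) = +∞ for x < 0. That is, for every open set O ⊆ ℝ, liminf (1/v(n)) log P(Bin(n-a_n,π(n))/v(n) ∈ O) ≥ -inf_{x∈O} H(x), and for every closed set C, limsup (1/v(n)) log P(Bin(n-a_n,π(n))/v(n) ∈ C)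 ≤ -inf_{x∈C} H(x). -/
/-!
Write `X ~ Bin(m, p)` with `m = n - aₙ`, so that `m p ~ v`, `p → 0` and `v → ∞`.

Upper bound: Chernoff's bound with tilt `log x` gives, for `x ≤ 1` resp. `x ≥ 1`,
`P(X ≤ x v)` resp. `P(X ≥ x v) ≤ exp (m p (x - 1) - v x log x) = exp (-v (H x + o(1)))`.
A closed set is split into its parts in `[0, 1]` and `[1, ∞)`; each part lies below its supremum
resp. above its infimum, which belong to it, and the two bounds are combined by the principle of
the largest term.

Lower bound: for `x ∈ O` with `x > 0` the single atom `i = ⌈x v⌉` already has probability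
`≥ exp (-v (H x + o(1)))`, by `choose m i ≥ (m + 1 - i)^i / i!` and Stirling's
`i! ≤ e i (i / e)^i`; for `x = 0` the atom `P(X = 0) = (1 - p)^m = exp (-v (1 + o(1)))`.
-/

open Filter
open scoped ENNReal

/-- `P(Bin(m,p)/c ∈ S)`. -/
noncomputable def binomProbIn (m : ℕ) (p : ℝ) (c : ℝ) (S : Set ℝ) : ℝ :=
  ∑ i ∈ Finset.range (m + 1), S.indicator (fun _ => binomialP m p i) ((i : ℝ) / c)

/-- The rate function `H`, with `H x = 1 - x + x log x` for `x ≥ 0`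
(so `H 0 = 1`, as `Real.log 0 = 0`) and `H x = +∞` for `x < 0`. -/
noncomputable def Hrate : ℝ → ℝ≥0∞ := fun x =>
  if x < 0 then ⊤ else ENNReal.ofReal (1 - x + x * Real.log x)

open Topology

section Binomial

open Finset
open scoped Nat

variable {m i : ℕ} {p c : ℝ} {S T : Set ℝ}

lemma binomialP_nonneg_s11 (hp₀ : 0 ≤ p) (hp₁ : p ≤ 1) : 0 ≤ binomialP m p i := by
  have : 0 ≤ 1 - p := by linarith
  unfold binomialP
  positivity

lemma binomialP_zero : binomialP m p 0 = (1 - p) ^ m := by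
  simp [binomialP]

lemma sum_exp_mul_binomialP (m : ℕ) (p t : ℝ) :
    ∑ i ∈ range (m + 1), Real.exp (t * i) * binomialP m p i = (p * Real.exp t + (1 - p)) ^ m := by
  rw [add_pow]
  refine sum_congr rfl fun i _ => ?_
  rw [binomialP, mul_pow, ← Real.exp_nat_mul]
  ring_nf

lemma binomProbIn_mono (hp₀ : 0 ≤ p) (hp₁ : p ≤ 1) (h : S ⊆ T) :
    binomProbIn m p c S ≤ binomProbIn m p c T :=
  sum_le_sum fun _ _ => Set.indicator_le_indicator_apply_of_subset h (binomialP_nonneg_s11 hp₀ hp₁)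

lemma binomProbIn_union_le (hp₀ : 0 ≤ p) (hp₁ : p ≤ 1) :
    binomProbIn m p c (S ∪ T) ≤ binomProbIn m p c S + binomProbIn m p c T := by
  rw [binomProbIn, binomProbIn, binomProbIn, ← sum_add_distrib]
  refine sum_le_sum fun i _ => ?_
  rw [← Set.indicator_union_add_inter_apply]
  exact le_add_of_nonneg_right (Set.indicator_nonneg (fun _ _ => binomialP_nonneg_s11 hp₀ hp₁) _)

lemma binomProbIn_inter_Ici_zero (hc : 0 ≤ c) :
    binomProbIn m p c (S ∩ Set.Ici 0) = binomProbIn m p c S := by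
  unfold binomProbIn
  refine sum_congr rfl fun i _ => ?_
  have : (0 : ℝ) ≤ i / c := by positivity
  by_cases h : (i : ℝ) / c ∈ S
  · rw [Set.indicator_of_mem h, Set.indicator_of_mem (Set.mem_inter h (Set.mem_Ici.2 this))]
  · rw [Set.indicator_of_notMem h, Set.indicator_of_notMem fun h' => h h'.1]

lemma binomialP_le_binomProbIn (hp₀ : 0 ≤ p) (hp₁ : p ≤ 1) (him : i ≤ m) (hi : (i : ℝ) / c ∈ S) :
    binomialP m p i ≤ binomProbIn m p c S := by
  have := single_le_sum (f := fun j : ℕ => S.indicator (fun _ => binomialP m p j) ((j : ℝ) / c))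
    (fun j _ => Set.indicator_nonneg (fun _ _ => binomialP_nonneg_s11 hp₀ hp₁) _)
    (mem_range.2 (Nat.lt_succ_of_le him))
  simpa [binomProbIn, Set.indicator_of_mem hi] using this

lemma binomProbIn_Iic_zero (hc : 0 < c) : binomProbIn m p c (Set.Iic 0) = (1 - p) ^ m := by
  rw [binomProbIn, sum_eq_single 0 (fun i _ hi => ?_) (by simp), ← binomialP_zero]
  · simp
  · have : (0 : ℝ) < i / c := div_pos (by positivity) hc
    simp [Set.indicator, not_le.2 this]

lemma binomProbIn_le_exp_of_forall_mem {t x : ℝ} (hp₀ : 0 ≤ p) (hp₁ : p ≤ 1) (hc : 0 < c)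
    (hS : ∀ y ∈ S, t * x ≤ t * y) :
    binomProbIn m p c S ≤ Real.exp (m * p * (Real.exp t - 1) - t * c * x) := by
  have hbase : 0 ≤ p * Real.exp t + (1 - p) := by positivity
  calc binomProbIn m p c S
      ≤ ∑ i ∈ range (m + 1), Real.exp (-(t * c * x)) * (Real.exp (t * i) * binomialP m p i) := by
        refine sum_le_sum fun i _ => ?_
        rw [← mul_assoc, ← Real.exp_add]
        by_cases hi : (i : ℝ) / c ∈ S
        · rw [Set.indicator_of_mem hi]
          refine le_mul_of_one_le_left (binomialP_nonneg_s11 hp₀ hp₁) (Real.one_le_exp ?_)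
          have := mul_le_mul_of_nonneg_left (hS _ hi) hc.le
          rw [mul_div_assoc', mul_div_assoc', mul_div_cancel_left₀ _ hc.ne'] at this
          linarith
        · rw [Set.indicator_of_notMem hi]
          exact mul_nonneg (Real.exp_pos _).le (binomialP_nonneg_s11 hp₀ hp₁)
    _ = Real.exp (-(t * c * x)) * (1 + p * (Real.exp t - 1)) ^ m := by
        rw [← mul_sum, sum_exp_mul_binomialP]
        ring_nf
    _ ≤ Real.exp (-(t * c * x)) * Real.exp (p * (Real.exp t - 1)) ^ m := by
        gcongr
        · linarith
        · linarith [Real.add_one_le_exp (p * (Real.exp t - 1))]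
    _ = Real.exp (m * p * (Real.exp t - 1) - t * c * x) := by
        rw [← Real.exp_nat_mul, ← Real.exp_add]
        ring_nf

lemma binomProbIn_Iic_le {x : ℝ} (hp₀ : 0 ≤ p) (hp₁ : p ≤ 1) (hc : 0 < c) (hx₀ : 0 ≤ x)
    (hx₁ : x ≤ 1) :
    binomProbIn m p c (Set.Iic x) ≤ Real.exp (m * p * (x - 1) - c * (x * Real.log x)) := by
  rcases hx₀.eq_or_lt with rfl | hx
  -- Here `0 * log 0 = 0`: the exponent `-m p` is the limit of Chernoff's bound as the tilt → -∞.
  · calc binomProbIn m p c (Set.Iic 0) = (1 - p) ^ m := binomProbIn_Iic_zero hc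
      _ ≤ Real.exp (-p) ^ m := by
        gcongr
        linarith [Real.add_one_le_exp (-p)]
      _ = Real.exp (m * p * (0 - 1) - c * (0 * Real.log 0)) := by
        rw [← Real.exp_nat_mul]
        ring_nf
  · convert binomProbIn_le_exp_of_forall_mem (S := Set.Iic x) (t := Real.log x) (x := x) hp₀ hp₁ hc
      (fun y hy => mul_le_mul_of_nonpos_left hy (Real.log_nonpos hx₀ hx₁)) using 2
    rw [Real.exp_log hx]
    ring

lemma binomProbIn_Ici_le {x : ℝ} (hp₀ : 0 ≤ p) (hp₁ : p ≤ 1) (hc : 0 < c) (hx : 1 ≤ x) :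
    binomProbIn m p c (Set.Ici x) ≤ Real.exp (m * p * (x - 1) - c * (x * Real.log x)) := by
  convert binomProbIn_le_exp_of_forall_mem (S := Set.Ici x) (t := Real.log x) (x := x) hp₀ hp₁ hc
    (fun y hy => mul_le_mul_of_nonneg_left hy (Real.log_nonneg hx)) using 2
  rw [Real.exp_log (by linarith)]
  ring

lemma factorial_le_exp_one_mul (n : ℕ) (hn : n ≠ 0) :
    (n ! : ℝ) ≤ Real.exp 1 * n * (n / Real.exp 1) ^ n := by
  obtain ⟨k, rfl⟩ := Nat.exists_eq_succ_of_ne_zero hn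
  have h := Stirling.stirlingSeq'_antitone (Nat.zero_le k)
  simp only [Function.comp_apply, Stirling.stirlingSeq, Nat.succ_eq_add_one] at h
  norm_num at h
  rw [div_le_iff₀ (by positivity)] at h
  have hsqrt : √((k : ℝ) + 1) ≤ k + 1 := Real.sqrt_le_self_iff.2 (Or.inr (by simp))
  push_cast
  calc ((k + 1)! : ℝ) ≤ _ := h
    _ = Real.exp 1 * √((k : ℝ) + 1) * (((k : ℝ) + 1) / Real.exp 1) ^ (k + 1) := by
        field_simp
    _ ≤ _ := by gcongr

lemma exp_le_binomialP (hp₀ : 0 < p) (hp₁ : p < 1) (hi : i ≠ 0) (him : i ≤ m) :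
    Real.exp (i * (Real.log ((m + 1 - i) * p / i) + 1) - 1 - Real.log i + m * Real.log (1 - p))
      ≤ binomialP m p i := by
  have hi₀ : (0 : ℝ) < i := by positivity
  have hw : (1 : ℝ) ≤ m + 1 - i := by
    have : (i : ℝ) ≤ m := by exact_mod_cast him
    linarith
  have hchoose : ((m : ℝ) + 1 - i) ^ i / i ! ≤ m.choose i := by
    have := Nat.pow_le_choose (α := ℝ) i m
    rwa [Nat.cast_sub (by omega), Nat.cast_add_one] at this
  calc Real.exp (i * (Real.log ((m + 1 - i) * p / i) + 1) - 1 - Real.log i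
          + m * Real.log (1 - p))
      = (((m : ℝ) + 1 - i) * p) ^ i * (1 - p) ^ m / (Real.exp 1 * i * (i / Real.exp 1) ^ i) := by
        rw [Real.exp_add, Real.exp_sub, Real.exp_sub, Real.exp_nat_mul, Real.exp_nat_mul,
          Real.exp_add, Real.exp_log (by positivity), Real.exp_log hi₀,
          Real.exp_log (by linarith), mul_pow, div_pow, div_pow]
        field_simp
    _ ≤ (((m : ℝ) + 1 - i) * p) ^ i * (1 - p) ^ m / i ! := by
        have : 0 ≤ 1 - p := by linarith
        gcongr
        exact factorial_le_exp_one_mul i hi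
    _ = ((m : ℝ) + 1 - i) ^ i / i ! * p ^ i * (1 - p) ^ m := by rw [mul_pow]; ring
    _ ≤ m.choose i * p ^ i * (1 - p) ^ (m - i) := by
        gcongr ?_ * _ * ?_
        exact pow_le_pow_of_le_one (by linarith) (by linarith) (Nat.sub_le m i)

end Binomial

section ScaledLog

noncomputable def scaledLog (v P : ℕ → ℝ) (n : ℕ) : EReal :=
  (((v n)⁻¹ : ℝ) : EReal) * ENNReal.log (ENNReal.ofReal (P n))

variable {v P Q R : ℕ → ℝ} {n : ℕ}

lemma scaledLog_le_of_le_exp {e : ℝ} (hv : 0 < v n) (h : P n ≤ Real.exp e) :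
    scaledLog v P n ≤ ((e / v n : ℝ) : EReal) := by
  have hlog : ENNReal.log (ENNReal.ofReal (P n)) ≤ (e : EReal) := by
    simpa [ENNReal.log_ofReal_of_pos (Real.exp_pos e)] using
      ENNReal.log_monotone (ENNReal.ofReal_le_ofReal h)
  calc scaledLog v P n ≤ (((v n)⁻¹ : ℝ) : EReal) * (e : EReal) :=
        mul_le_mul_of_nonneg_left hlog (by exact_mod_cast (inv_pos.2 hv).le)
    _ = ((e / v n : ℝ) : EReal) := by rw [← EReal.coe_mul, inv_mul_eq_div]

lemma le_scaledLog_of_exp_le {e : ℝ} (hv : 0 < v n) (h : Real.exp e ≤ P n) :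
    ((e / v n : ℝ) : EReal) ≤ scaledLog v P n := by
  have hlog : (e : EReal) ≤ ENNReal.log (ENNReal.ofReal (P n)) := by
    simpa [ENNReal.log_ofReal_of_pos (Real.exp_pos e)] using
      ENNReal.log_monotone (ENNReal.ofReal_le_ofReal h)
  calc ((e / v n : ℝ) : EReal) = (((v n)⁻¹ : ℝ) : EReal) * (e : EReal) := by
        rw [← EReal.coe_mul, inv_mul_eq_div]
    _ ≤ scaledLog v P n := mul_le_mul_of_nonneg_left hlog (by exact_mod_cast (inv_pos.2 hv).le)

lemma limsup_scaledLog_le {e : ℕ → ℝ} {L : ℝ} (hv : ∀ n, 0 < v n)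
    (h : ∀ᶠ n in atTop, P n ≤ Real.exp (e n)) (he : Tendsto (fun n => e n / v n) atTop (𝓝 L)) :
    limsup (scaledLog v P) atTop ≤ L :=
  calc limsup (scaledLog v P) atTop ≤ limsup (fun n => ((e n / v n : ℝ) : EReal)) atTop :=
        limsup_le_limsup (h.mono fun n hn => scaledLog_le_of_le_exp (hv n) hn)
    _ = L := ((continuous_coe_real_ereal.tendsto L).comp he).limsup_eq

lemma le_liminf_scaledLog {e : ℕ → ℝ} {L : ℝ} (hv : ∀ n, 0 < v n)
    (h : ∀ᶠ n in atTop, Real.exp (e n) ≤ P n) (he : Tendsto (fun n => e n / v n) atTop (𝓝 L)) :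
    (L : EReal) ≤ liminf (scaledLog v P) atTop :=
  calc (L : EReal) = liminf (fun n => ((e n / v n : ℝ) : EReal)) atTop :=
        ((continuous_coe_real_ereal.tendsto L).comp he).liminf_eq.symm
    _ ≤ liminf (scaledLog v P) atTop :=
        liminf_le_liminf (h.mono fun n hn => le_scaledLog_of_exp_le (hv n) hn)

lemma scaledLog_le_log_two_div_add_max (hv : 0 < v n) (h : P n ≤ Q n + R n) :
    scaledLog v P n ≤
      ((Real.log 2 / v n : ℝ) : EReal) + max (scaledLog v Q n) (scaledLog v R n) := by
  have hv' : (0 : EReal) ≤ (((v n)⁻¹ : ℝ) : EReal) := by exact_mod_cast (inv_pos.2 hv).le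
  have hlog : ENNReal.log (ENNReal.ofReal (P n)) ≤ (Real.log 2 : EReal) +
      max (ENNReal.log (ENNReal.ofReal (Q n))) (ENNReal.log (ENNReal.ofReal (R n))) := by
    rw [← ENNReal.log_monotone.map_max, ← ENNReal.log_ofReal_of_pos two_pos, ENNReal.ofReal_ofNat,
      ← ENNReal.log_mul_add]
    refine ENNReal.log_monotone ((ENNReal.ofReal_le_ofReal h).trans ?_)
    rw [two_mul]
    exact ENNReal.ofReal_add_le.trans (add_le_add (le_max_left _ _) (le_max_right _ _))
  calc scaledLog v P n ≤ (((v n)⁻¹ : ℝ) : EReal) * ((Real.log 2 : EReal) +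
        max (ENNReal.log (ENNReal.ofReal (Q n))) (ENNReal.log (ENNReal.ofReal (R n)))) :=
        mul_le_mul_of_nonneg_left hlog hv'
    _ = _ := by
        rw [EReal.left_distrib_of_nonneg_of_ne_top hv' (EReal.coe_ne_top _),
          (monotone_mul_left_of_nonneg hv').map_max, ← EReal.coe_mul, inv_mul_eq_div]
        rfl

lemma limsup_scaledLog_le_max (hv : ∀ n, 0 < v n) (hvinf : Tendsto v atTop atTop)
    (h : ∀ n, P n ≤ Q n + R n) :
    limsup (scaledLog v P) atTop ≤
      max (limsup (scaledLog v Q) atTop) (limsup (scaledLog v R) atTop) := by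
  have hlog2 : Tendsto (fun n => ((Real.log 2 / v n : ℝ) : EReal)) atTop (𝓝 0) := by
    rw [← EReal.coe_zero]
    exact (continuous_coe_real_ereal.tendsto 0).comp (tendsto_const_nhds.div_atTop hvinf)
  calc limsup (scaledLog v P) atTop
      ≤ limsup ((fun n => ((Real.log 2 / v n : ℝ) : EReal)) +
          fun n => max (scaledLog v Q n) (scaledLog v R n)) atTop :=
        limsup_le_limsup <| Eventually.of_forall fun n =>
          scaledLog_le_log_two_div_add_max (hv n) (h n)
    _ ≤ limsup (fun n => ((Real.log 2 / v n : ℝ) : EReal)) atTop +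
          limsup (fun n => max (scaledLog v Q n) (scaledLog v R n)) atTop := by
        refine EReal.limsup_add_le (.inl ?_) (.inl ?_) <;> simp [hlog2.limsup_eq]
    _ = max (limsup (scaledLog v Q) atTop) (limsup (scaledLog v R) atTop) := by
        rw [hlog2.limsup_eq, zero_add, limsup_max]

end ScaledLog

lemma coe_Hrate_of_nonneg {x : ℝ} (hx : 0 ≤ x) :
    (Hrate x : EReal) = ((1 - x + x * Real.log x : ℝ) : EReal) := by
  rw [Hrate, if_neg (not_lt.2 hx), EReal.coe_ennreal_ofReal,
    max_eq_left (by linarith [Real.self_sub_one_le_mul_log hx])]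

lemma tendsto_log_one_sub_div_self :
    Tendsto (fun t => Real.log (1 - t) / t) (𝓝[≠] 0) (𝓝 (-1)) := by
  have hd : HasDerivAt (fun t => Real.log (1 - t)) (-1) 0 := by
    simpa using ((hasDerivAt_id (0 : ℝ)).const_sub 1).log (by norm_num)
  simpa [div_eq_inv_mul] using hd.tendsto_slope_zero

section Regime

variable {m : ℕ → ℕ} {p v : ℕ → ℝ}

lemma tendsto_mul_log_one_sub_div (hp : ∀ n, p n ∈ Set.Ioo 0 1) (hp0 : Tendsto p atTop (𝓝 0))
    (hmp : Tendsto (fun n => m n * p n / v n) atTop (𝓝 1)) :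
    Tendsto (fun n => m n * Real.log (1 - p n) / v n) atTop (𝓝 (-1)) := by
  have hp0' : Tendsto p atTop (𝓝[≠] 0) :=
    tendsto_nhdsWithin_iff.2 ⟨hp0, Eventually.of_forall fun n => (hp n).1.ne'⟩
  have := hmp.mul (tendsto_log_one_sub_div_self.comp hp0')
  rw [one_mul] at this
  refine this.congr fun n => ?_
  have := (hp n).1.ne'
  simp only [Function.comp_apply]
  field_simp

lemma tendsto_natCast_div_atTop (hp : ∀ n, p n ∈ Set.Ioo 0 1) (hp0 : Tendsto p atTop (𝓝 0))
    (hmp : Tendsto (fun n => m n * p n / v n) atTop (𝓝 1)) :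
    Tendsto (fun n => (m n : ℝ) / v n) atTop atTop := by
  have hp0' : Tendsto p atTop (𝓝[>] 0) :=
    tendsto_nhdsWithin_iff.2 ⟨hp0, Eventually.of_forall fun n => (hp n).1⟩
  refine (hmp.pos_mul_atTop one_pos (tendsto_inv_nhdsGT_zero.comp hp0')).congr fun n => ?_
  have := (hp n).1.ne'
  simp only [Function.comp_apply]
  field_simp

lemma tendsto_binomialP_exponent {i : ℕ → ℕ} {x : ℝ} (hx : 0 < x) (hv : ∀ n, 0 < v n)
    (hvinf : Tendsto v atTop atTop) (hp : ∀ n, p n ∈ Set.Ioo 0 1) (hp0 : Tendsto p atTop (𝓝 0))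
    (hmp : Tendsto (fun n => m n * p n / v n) atTop (𝓝 1))
    (hi : Tendsto (fun n => (i n : ℝ) / v n) atTop (𝓝 x)) :
    Tendsto (fun n => (i n * (Real.log ((m n + 1 - i n) * p n / i n) + 1) - 1 - Real.log (i n)
      + m n * Real.log (1 - p n)) / v n) atTop (𝓝 (-(1 - x + x * Real.log x))) := by
  have hinv : Tendsto (fun n => 1 / v n) atTop (𝓝 0) := tendsto_const_nhds.div_atTop hvinf
  have hw : Tendsto (fun n => (m n + 1 - i n) * p n / v n) atTop (𝓝 1) := by
    have := (hmp.add (hp0.div_atTop hvinf)).sub (hi.mul hp0)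
    simp only [add_zero, mul_zero, sub_zero] at this
    exact this.congr fun n => by ring
  have hlog_ratio :
      Tendsto (fun n => Real.log ((m n + 1 - i n) * p n / i n)) atTop (𝓝 (-Real.log x)) := by
    have := (hw.div hi hx.ne').log (by positivity)
    rw [one_div, Real.log_inv] at this
    exact this.congr fun n => by rw [Pi.div_apply, div_div_div_cancel_right₀ (hv n).ne']
  have hi_top : Tendsto (fun n => (i n : ℝ)) atTop atTop :=
    (hi.pos_mul_atTop hx hvinf).congr fun n => div_mul_cancel₀ _ (hv n).ne'
  have hlog_i : Tendsto (fun n => Real.log (i n) / v n) atTop (𝓝 0) := by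
    have := (Real.isLittleO_log_id_atTop.comp_tendsto hi_top).tendsto_div_nhds_zero.mul hi
    rw [zero_mul] at this
    refine this.congr fun n => ?_
    simp only [Function.comp_apply, id]
    rcases eq_or_ne (i n : ℝ) 0 with h | h
    · simp [h]
    · field_simp
  have := (((hi.mul (hlog_ratio.add_const 1)).sub hinv).sub hlog_i).add
    (tendsto_mul_log_one_sub_div hp hp0 hmp)
  convert this using 2 <;> ring

lemma le_liminf_scaledLog_binomProbIn_of_pos {O : Set ℝ} {x : ℝ} (hx : 0 < x) (hO : O ∈ 𝓝 x)
    (hv : ∀ n, 0 < v n) (hvinf : Tendsto v atTop atTop) (hp : ∀ n, p n ∈ Set.Ioo 0 1)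
    (hp0 : Tendsto p atTop (𝓝 0)) (hmp : Tendsto (fun n => m n * p n / v n) atTop (𝓝 1)) :
    ((-(1 - x + x * Real.log x) : ℝ) : EReal) ≤
      liminf (scaledLog v fun n => binomProbIn (m n) (p n) (v n) O) atTop := by
  have hi : Tendsto (fun n => (⌈x * v n⌉₊ : ℝ) / v n) atTop (𝓝 x) :=
    (tendsto_nat_ceil_mul_div_atTop hx.le).comp hvinf
  have him : ∀ᶠ n in atTop, ⌈x * v n⌉₊ ≤ m n := by
    filter_upwards [(tendsto_natCast_div_atTop hp hp0 hmp).eventually_ge_atTop x] with n hn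
    exact Nat.ceil_le.2 ((le_div_iff₀ (hv n)).1 hn)
  refine le_liminf_scaledLog hv ?_ (tendsto_binomialP_exponent hx hv hvinf hp hp0 hmp hi)
  filter_upwards [him, hi.eventually hO] with n hn hnO
  exact (exp_le_binomialP (hp n).1 (hp n).2 (Nat.ceil_pos.2 (mul_pos hx (hv n))).ne' hn).trans
    (binomialP_le_binomProbIn (hp n).1.le (hp n).2.le hn hnO)

lemma le_liminf_scaledLog_binomProbIn_of_zero_mem {O : Set ℝ} (hO : 0 ∈ O) (hv : ∀ n, 0 < v n)
    (hp : ∀ n, p n ∈ Set.Ioo 0 1) (hp0 : Tendsto p atTop (𝓝 0))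
    (hmp : Tendsto (fun n => m n * p n / v n) atTop (𝓝 1)) :
    ((-1 : ℝ) : EReal) ≤ liminf (scaledLog v fun n => binomProbIn (m n) (p n) (v n) O) atTop := by
  refine le_liminf_scaledLog hv (Eventually.of_forall fun n => ?_)
    (tendsto_mul_log_one_sub_div hp hp0 hmp)
  rw [Real.exp_nat_mul, Real.exp_log (by linarith [(hp n).2]), ← binomialP_zero]
  exact binomialP_le_binomProbIn (hp n).1.le (hp n).2.le (Nat.zero_le _) (by simpa using hO)

lemma limsup_scaledLog_le_neg_Hrate {P : ℕ → ℝ} {x : ℝ} (hx : 0 ≤ x) (hv : ∀ n, 0 < v n)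
    (hmp : Tendsto (fun n => m n * p n / v n) atTop (𝓝 1))
    (h : ∀ n, P n ≤ Real.exp (m n * p n * (x - 1) - v n * (x * Real.log x))) :
    limsup (scaledLog v P) atTop ≤ -(Hrate x : EReal) := by
  rw [coe_Hrate_of_nonneg hx, ← EReal.coe_neg]
  refine limsup_scaledLog_le hv (Eventually.of_forall h) ?_
  have := (hmp.mul_const (x - 1)).sub_const (x * Real.log x)
  convert this using 2 with n
  · have := (hv n).ne'
    field_simp
  · ring

lemma limsup_scaledLog_binomProbIn_empty (hv : ∀ n, 0 < v n) :
    limsup (scaledLog v fun n => binomProbIn (m n) (p n) (v n) ∅) atTop = ⊥ := by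
  have : scaledLog v (fun n => binomProbIn (m n) (p n) (v n) ∅) = fun _ => ⊥ := funext fun n => by
    simp [scaledLog, binomProbIn, EReal.coe_mul_bot_of_pos (inv_pos.2 (hv n))]
  rw [this, limsup_const]

lemma limsup_scaledLog_binomProbIn_le_of_subset_Icc {C : Set ℝ} (hC : IsClosed C)
    (hC01 : C ⊆ Set.Icc 0 1) (hv : ∀ n, 0 < v n) (hp : ∀ n, p n ∈ Set.Ioo 0 1)
    (hmp : Tendsto (fun n => m n * p n / v n) atTop (𝓝 1)) :
    limsup (scaledLog v fun n => binomProbIn (m n) (p n) (v n) C) atTop ≤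
      -((⨅ x ∈ C, Hrate x : ℝ≥0∞) : EReal) := by
  rcases C.eq_empty_or_nonempty with rfl | hne
  · simp [limsup_scaledLog_binomProbIn_empty hv]
  have hbdd : BddAbove C := ⟨1, fun y hy => (hC01 hy).2⟩
  have hmem := hC.csSup_mem hne hbdd
  refine (limsup_scaledLog_le_neg_Hrate (hC01 hmem).1 hv hmp fun n => ?_).trans
    (EReal.neg_le_neg_iff.2 (EReal.coe_ennreal_le_coe_ennreal_iff.2 (iInf₂_le _ hmem)))
  exact (binomProbIn_mono (hp n).1.le (hp n).2.le fun y hy => le_csSup hbdd hy).trans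
    (binomProbIn_Iic_le (hp n).1.le (hp n).2.le (hv n) (hC01 hmem).1 (hC01 hmem).2)

lemma limsup_scaledLog_binomProbIn_le_of_subset_Ici {C : Set ℝ} (hC : IsClosed C)
    (hC1 : C ⊆ Set.Ici 1) (hv : ∀ n, 0 < v n) (hp : ∀ n, p n ∈ Set.Ioo 0 1)
    (hmp : Tendsto (fun n => m n * p n / v n) atTop (𝓝 1)) :
    limsup (scaledLog v fun n => binomProbIn (m n) (p n) (v n) C) atTop ≤
      -((⨅ x ∈ C, Hrate x : ℝ≥0∞) : EReal) := by
  rcases C.eq_empty_or_nonempty with rfl | hne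
  · simp [limsup_scaledLog_binomProbIn_empty hv]
  have hbdd : BddBelow C := ⟨1, fun y hy => hC1 hy⟩
  have hmem := hC.csInf_mem hne hbdd
  have h1 : (1 : ℝ) ≤ sInf C := hC1 hmem
  refine (limsup_scaledLog_le_neg_Hrate (by linarith) hv hmp fun n => ?_).trans
    (EReal.neg_le_neg_iff.2 (EReal.coe_ennreal_le_coe_ennreal_iff.2 (iInf₂_le _ hmem)))
  exact (binomProbIn_mono (hp n).1.le (hp n).2.le fun y hy => csInf_le hbdd hy).trans
    (binomProbIn_Ici_le (hp n).1.le (hp n).2.le (hv n) h1)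

theorem binomial_ldp_upper {C : Set ℝ} (hC : IsClosed C) (hv : ∀ n, 0 < v n)
    (hvinf : Tendsto v atTop atTop) (hp : ∀ n, p n ∈ Set.Ioo 0 1)
    (hmp : Tendsto (fun n => m n * p n / v n) atTop (𝓝 1)) :
    limsup (scaledLog v fun n => binomProbIn (m n) (p n) (v n) C) atTop ≤
      -((⨅ x ∈ C, Hrate x : ℝ≥0∞) : EReal) := by
  have hsplit : ∀ n, binomProbIn (m n) (p n) (v n) C ≤
      binomProbIn (m n) (p n) (v n) (C ∩ Set.Icc 0 1) +
        binomProbIn (m n) (p n) (v n) (C ∩ Set.Ici 1) := fun n => by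
    have hsub : C ∩ Set.Ici 0 ⊆ (C ∩ Set.Icc 0 1) ∪ (C ∩ Set.Ici 1) := fun y ⟨hyC, hy0⟩ =>
      (le_total y 1).imp (fun hy1 => ⟨hyC, hy0, hy1⟩) (fun hy1 => ⟨hyC, hy1⟩)
    rw [← binomProbIn_inter_Ici_zero (hv n).le]
    exact (binomProbIn_mono (hp n).1.le (hp n).2.le hsub).trans
      (binomProbIn_union_le (hp n).1.le (hp n).2.le)
  have hanti : ∀ D ⊆ C, -((⨅ x ∈ D, Hrate x : ℝ≥0∞) : EReal) ≤
      -((⨅ x ∈ C, Hrate x : ℝ≥0∞) : EReal) := fun D hD =>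
    EReal.neg_le_neg_iff.2 (EReal.coe_ennreal_le_coe_ennreal_iff.2 (biInf_mono hD))
  refine (limsup_scaledLog_le_max hv hvinf hsplit).trans (max_le ?_ ?_)
  · exact (limsup_scaledLog_binomProbIn_le_of_subset_Icc (hC.inter isClosed_Icc)
      Set.inter_subset_right hv hp hmp).trans (hanti _ Set.inter_subset_left)
  · exact (limsup_scaledLog_binomProbIn_le_of_subset_Ici (hC.inter isClosed_Ici)
      Set.inter_subset_right hv hp hmp).trans (hanti _ Set.inter_subset_left)

theorem binomial_ldp_lower {O : Set ℝ} (hO : IsOpen O) (hv : ∀ n, 0 < v n)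
    (hvinf : Tendsto v atTop atTop) (hp : ∀ n, p n ∈ Set.Ioo 0 1) (hp0 : Tendsto p atTop (𝓝 0))
    (hmp : Tendsto (fun n => m n * p n / v n) atTop (𝓝 1)) :
    -((⨅ x ∈ O, Hrate x : ℝ≥0∞) : EReal) ≤
      liminf (scaledLog v fun n => binomProbIn (m n) (p n) (v n) O) atTop := by
  set L := liminf (scaledLog v fun n => binomProbIn (m n) (p n) (v n) O) atTop
  have hpt : ∀ x ∈ O, -(Hrate x : EReal) ≤ L := by
    intro x hx
    rcases lt_trichotomy x 0 with hneg | rfl | hpos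
    · simp [Hrate, hneg]
    · simpa [coe_Hrate_of_nonneg le_rfl] using
        le_liminf_scaledLog_binomProbIn_of_zero_mem hx hv hp hp0 hmp
    · rw [coe_Hrate_of_nonneg hpos.le, ← EReal.coe_neg]
      exact le_liminf_scaledLog_binomProbIn_of_pos hpos (hO.mem_nhds hx) hv hvinf hp hp0 hmp
  rw [EReal.neg_le]
  rcases le_total (-L) 0 with h | h
  · exact h.trans (EReal.coe_ennreal_nonneg _)
  · rw [← EReal.coe_toENNReal h, EReal.coe_ennreal_le_coe_ennreal_iff]
    refine le_iInf₂ fun x hx => ?_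
    rw [← EReal.coe_ennreal_le_coe_ennreal_iff, EReal.coe_toENNReal h, EReal.neg_le]
    exact hpt x hx

end Regime

lemma tendsto_natSub_div_self {a : ℕ → ℕ} (ha : Tendsto (fun n => (a n : ℝ) / n) atTop (𝓝 0)) :
    Tendsto (fun n => ((n - a n : ℕ) : ℝ) / n) atTop (𝓝 1) := by
  refine tendsto_of_tendsto_of_tendsto_of_le_of_le' (by simpa using ha.const_sub 1)
    tendsto_const_nhds ?_ (Eventually.of_forall fun n => ?_)
  · filter_upwards [eventually_gt_atTop 0] with n hn
    have hn' : (0 : ℝ) < n := by exact_mod_cast hn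
    rw [one_sub_div hn'.ne']
    gcongr
    rw [sub_le_iff_le_add]
    exact_mod_cast le_tsub_add
  · exact div_le_one_of_le₀ (by exact_mod_cast Nat.sub_le n (a n)) (Nat.cast_nonneg n)

/-- LDP for `Bin(n - a_n, π(n)) / v(n)` with speed `v(n)` and
rate function `H`. -/
theorem stmt_11 (a : ℕ → ℕ) (π v : ℕ → ℝ)
    (ha : Tendsto (fun n => (a n : ℝ) / (n : ℝ)) atTop (nhds 0))
    (hπ : ∀ n, π n ∈ Set.Ioo (0 : ℝ) 1)
    (hv : ∀ n, 0 < v n)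
    (hvn : Tendsto (fun n => v n / (n : ℝ)) atTop (nhds 0))
    (hvinf : Tendsto v atTop atTop)
    (hπv : Tendsto (fun n : ℕ => (n : ℝ) * π n / v n) atTop (nhds 1)) :
    (∀ O : Set ℝ, IsOpen O →
      -((⨅ x ∈ O, Hrate x : ℝ≥0∞) : EReal) ≤
        liminf (fun n => (((v n)⁻¹ : ℝ) : EReal) *
          ENNReal.log (ENNReal.ofReal (binomProbIn (n - a n) (π n) (v n) O))) atTop) ∧
    (∀ C : Set ℝ, IsClosed C →
      limsup (fun n => (((v n)⁻¹ : ℝ) : EReal) *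
          ENNReal.log (ENNReal.ofReal (binomProbIn (n - a n) (π n) (v n) C))) atTop ≤
        -((⨅ x ∈ C, Hrate x : ℝ≥0∞) : EReal)) := by
  have hπ0 : Tendsto π atTop (𝓝 0) := by
    have := hπv.mul hvn
    rw [one_mul] at this
    refine this.congr' ((eventually_ne_atTop 0).mono fun n hn => ?_)
    have := (hv n).ne'
    field_simp
  have hmπ : Tendsto (fun n => ((n - a n : ℕ) : ℝ) * π n / v n) atTop (𝓝 1) := by
    have := (tendsto_natSub_div_self ha).mul hπv
    rw [one_mul] at this
    refine this.congr' ((eventually_ne_atTop 0).mono fun n hn => ?_)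
    have := (hv n).ne'
    field_simp
  exact ⟨fun O hO => binomial_ldp_lower hO hv hvinf hπ hπ0 hmπ,
    fun C hC => binomial_ldp_upper hC hv hvinf hπ hmπ⟩
end

section
/- Fix integer r ≥ 2 and p_n ∈ (0,1) with p_n → 0 and n p_n → ∞. Let π_n(t) := P(Bin(⌊t⌋, p_n) ≥ r), and let f : ℕ → ℝ₊ satisfy f(n) = o(1/p_n). Then n(1 - π_n(n - f(n))) ∼ n (n p_n)^{r-1} (1-p_n)^n / (r-1)! as n → ∞ (ratio converging to 1). -/
open Filter

/-!
With `M = ⌊n - f n⌋₊`, `1 - π_n` is the lower tail `∑_{i<r} P(Bin(M, p) = i)`. Divided by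
`n (n p)^{r-1} (1-p)^n / (r-1)!`, its `i`-th term becomes
`(r-1)!/i! · M^{(i)}/n^i · (n p)^{-(r-1-i)} · (1-p)^{-(n-M+i)}`, where `M^{(i)}` is the falling
factorial. Since `M / n → 1`, `n p → ∞` and `(n - M) p ≤ (f n + 1) p → 0`, every factor converges,
and only the term `i = r - 1` survives, with limit `1`.
-/

open Topology Finset
open scoped Nat

lemma one_sub_binomTail (m r : ℕ) (p : ℝ) (h : r ≤ m + 1) :
    1 - binomTail m p r = ∑ i ∈ range r, binomialP m p i := by
  have htotal : ∑ i ∈ range (m + 1), binomialP m p i = 1 := by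
    calc ∑ i ∈ range (m + 1), binomialP m p i = (p + (1 - p)) ^ m := by
          rw [add_pow]; exact sum_congr rfl fun i _ => by rw [binomialP]; ring
      _ = 1 := by simp
  rw [← htotal, binomTail, range_eq_Ico, range_eq_Ico, ← Ico_add_one_right_eq_Icc,
    ← sum_Ico_consecutive _ (Nat.zero_le r) h]
  ring

lemma mul_binomialP_div_eq {m n i r : ℕ} {p : ℝ} (hi : i < r) (him : i ≤ m) (hmn : m ≤ n)
    (hn : n ≠ 0) (hp : p ≠ 0) (hq : 1 - p ≠ 0) :
    n * binomialP m p i / (n * (n * p) ^ (r - 1) * (1 - p) ^ n / (r - 1)!) =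
      (r - 1)! / i ! * (m.descFactorial i / (n : ℝ) ^ i) * ((n * p) ^ (r - 1 - i))⁻¹ *
        ((1 - p) ^ (n - m + i))⁻¹ := by
  have hsplit_np : ((n : ℝ) * p) ^ (r - 1) = (n * p) ^ (r - 1 - i) * (n * p) ^ i := by
    rw [← pow_add, Nat.sub_add_cancel (by omega)]
  have hsplit_q : (1 - p) ^ n = (1 - p) ^ (m - i) * (1 - p) ^ (n - m + i) := by
    rw [← pow_add]; congr 1; omega
  rw [binomialP, Nat.descFactorial_eq_factorial_mul_choose, hsplit_np, hsplit_q]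
  push_cast
  field_simp
  ring

lemma Nat.cast_descFactorial_succ {R : Type*} [Ring R] (a k : ℕ) :
    (a.descFactorial (k + 1) : R) = ((a : R) - k) * a.descFactorial k := by
  rcases lt_or_ge a k with h | h
  · simp [Nat.descFactorial_of_lt h]
  · rw [Nat.descFactorial_succ, Nat.cast_mul, Nat.cast_sub h]

section Asymptotics

variable {ι : Type*} {l : Filter ι}

lemma tendsto_one_sub_pow_of_tendsto_mul {q : ι → ℝ} {k : ι → ℕ} (hq0 : ∀ j, 0 ≤ q j)
    (hq1 : ∀ j, q j ≤ 1) (h : Tendsto (fun j => k j * q j) l (𝓝 0)) :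
    Tendsto (fun j => (1 - q j) ^ k j) l (𝓝 1) := by
  have hlow : Tendsto (fun j => 1 - k j * q j) l (𝓝 1) := by simpa using h.const_sub 1
  refine tendsto_of_tendsto_of_tendsto_of_le_of_le hlow tendsto_const_nhds (fun j => ?_)
    (fun j => pow_le_one₀ (by linarith [hq1 j]) (by linarith [hq0 j]))
  simpa [sub_eq_add_neg] using one_add_mul_le_pow (a := -q j) (by linarith [hq1 j]) (k j)

lemma tendsto_inv_pow_of_tendsto_atTop {x : ι → ℝ} (hx : Tendsto x l atTop) (k : ℕ) :
    Tendsto (fun j => (x j ^ k)⁻¹) l (𝓝 (if k = 0 then 1 else 0)) := by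
  split_ifs with hk
  · simpa [hk] using tendsto_const_nhds
  · exact ((tendsto_pow_atTop hk).comp hx).inv_tendsto_atTop

lemma tendsto_descFactorial_div_pow {M : ι → ℕ} {x : ι → ℝ} (hx : Tendsto x l atTop)
    (hM : Tendsto (fun j => (M j : ℝ) / x j) l (𝓝 1)) (k : ℕ) :
    Tendsto (fun j => ((M j).descFactorial k : ℝ) / x j ^ k) l (𝓝 1) := by
  induction k with
  | zero => simpa using tendsto_const_nhds
  | succ k ih =>
    have hfactor : Tendsto (fun j => (M j : ℝ) / x j - k * (x j)⁻¹) l (𝓝 1) := by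
      simpa using hM.sub (hx.inv_tendsto_atTop.const_mul (k : ℝ))
    have hlim := hfactor.mul ih
    rw [one_mul] at hlim
    refine hlim.congr' ?_
    filter_upwards [hx.eventually_gt_atTop 0] with j hj
    rw [Nat.cast_descFactorial_succ, pow_succ]
    field_simp

lemma tendsto_natFloor_div {x y : ι → ℝ} (hx : Tendsto x l atTop)
    (hy : Tendsto (fun j => y j / x j) l (𝓝 1)) :
    Tendsto (fun j => (⌊y j⌋₊ : ℝ) / x j) l (𝓝 1) := by
  have hy_top : Tendsto y l atTop := by
    refine (hy.pos_mul_atTop one_pos hx).congr' ?_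
    filter_upwards [hx.eventually_gt_atTop 0] with j hj
    field_simp
  have hlim := (tendsto_nat_floor_div_atTop.comp hy_top).mul hy
  rw [one_mul] at hlim
  refine hlim.congr' ?_
  filter_upwards [hy_top.eventually_gt_atTop 0] with j hj
  simp only [Function.comp_apply]
  field_simp

end Asymptotics

section FloorShift

variable {p f : ℕ → ℝ}

lemma natFloor_sub_le_self (n : ℕ) {t : ℝ} (ht : 0 ≤ t) : ⌊(n : ℝ) - t⌋₊ ≤ n := by
  simpa using Nat.floor_le_floor (by linarith : (n : ℝ) - t ≤ n)

lemma natCast_sub_natFloor_sub_lt (n : ℕ) {t : ℝ} (ht : 0 ≤ t) :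
    ((n - ⌊(n : ℝ) - t⌋₊ : ℕ) : ℝ) < t + 1 := by
  rw [Nat.cast_sub (natFloor_sub_le_self n ht)]
  linarith [Nat.lt_floor_add_one ((n : ℝ) - t)]

lemma tendsto_natFloor_sub_div (hp : ∀ n, 0 < p n)
    (hnp : Tendsto (fun n : ℕ => (n : ℝ) * p n) atTop atTop)
    (hfp : Tendsto (fun n => f n * p n) atTop (𝓝 0)) :
    Tendsto (fun n : ℕ => (⌊(n : ℝ) - f n⌋₊ : ℝ) / n) atTop (𝓝 1) := by
  refine tendsto_natFloor_div tendsto_natCast_atTop_atTop ?_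
  have hf_div : Tendsto (fun n : ℕ => f n / n) atTop (𝓝 0) := by
    refine (hfp.div_atTop hnp).congr' ?_
    filter_upwards [eventually_gt_atTop 0] with n hn
    exact mul_div_mul_right _ _ (hp n).ne'
  have hlim : Tendsto (fun n : ℕ => 1 - f n / n) atTop (𝓝 1) := by
    simpa using hf_div.const_sub 1
  refine hlim.congr' ?_
  filter_upwards [eventually_gt_atTop 0] with n hn
  field_simp

lemma tendsto_one_sub_pow_sub_natFloor_sub (hp : ∀ n, p n ∈ Set.Ioo (0 : ℝ) 1)
    (hp0 : Tendsto p atTop (𝓝 0)) (hf : ∀ n, 0 ≤ f n)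
    (hfp : Tendsto (fun n => f n * p n) atTop (𝓝 0)) (c : ℕ) :
    Tendsto (fun n : ℕ => (1 - p n) ^ (n - ⌊(n : ℝ) - f n⌋₊ + c)) atTop (𝓝 1) := by
  refine tendsto_one_sub_pow_of_tendsto_mul (fun n => (hp n).1.le) (fun n => (hp n).2.le) ?_
  have hbound : Tendsto (fun n => f n * p n + (1 + c) * p n) atTop (𝓝 0) := by
    simpa using hfp.add (hp0.const_mul ((1 : ℝ) + c))
  refine squeeze_zero (fun n => mul_nonneg (Nat.cast_nonneg _) (hp n).1.le) (fun n => ?_) hbound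
  have hgap := natCast_sub_natFloor_sub_lt n (hf n)
  have hpn := (hp n).1
  push_cast
  nlinarith

end FloorShift

/-- with `π_n(t) = P(Bin(⌊t⌋, p_n) ≥ r)` and `f(n) = o(1/p_n)`,
`n(1 - π_n(n - f(n))) ∼ n (n p_n)^{r-1} (1-p_n)^n / (r-1)!` (ratio → 1). -/
theorem stmt_18 (r : ℕ) (hr : 2 ≤ r) (p : ℕ → ℝ)
    (hp : ∀ n, p n ∈ Set.Ioo (0 : ℝ) 1)
    (hp0 : Tendsto p atTop (nhds 0))
    (hnp : Tendsto (fun n : ℕ => (n : ℝ) * p n) atTop atTop)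
    (f : ℕ → ℝ) (hf : ∀ n, 0 < f n)
    (hfp : Tendsto (fun n => f n * p n) atTop (nhds 0)) :
    Tendsto (fun n : ℕ =>
        ((n : ℝ) * (1 - binomTail ⌊(n : ℝ) - f n⌋₊ (p n) r)) /
          ((n : ℝ) * ((n : ℝ) * p n) ^ (r - 1) * (1 - p n) ^ n /
            ((r - 1).factorial : ℝ)))
      atTop (nhds 1) := by
  set M : ℕ → ℕ := fun n => ⌊(n : ℝ) - f n⌋₊
  have hM : Tendsto (fun n => (M n : ℝ) / n) atTop (𝓝 1) :=
    tendsto_natFloor_sub_div (fun n => (hp n).1) hnp hfp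
  have hM_ge : ∀ᶠ n in atTop, r ≤ M n := by
    refine (tendsto_natCast_atTop_iff.mp ((hM.pos_mul_atTop one_pos
      tendsto_natCast_atTop_atTop).congr' ?_)).eventually_ge_atTop r
    filter_upwards [eventually_gt_atTop 0] with n hn
    field_simp
  have hterm : ∀ i ∈ range r, Tendsto (fun n => (r - 1)! / i ! *
      ((M n).descFactorial i / (n : ℝ) ^ i) * ((n * p n) ^ (r - 1 - i))⁻¹ *
      ((1 - p n) ^ (n - M n + i))⁻¹) atTop
      (𝓝 ((r - 1)! / i ! * 1 * (if r - 1 - i = 0 then 1 else 0) * 1⁻¹)) := fun i _ =>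
    (((tendsto_descFactorial_div_pow tendsto_natCast_atTop_atTop hM i).const_mul _).mul
      (tendsto_inv_pow_of_tendsto_atTop hnp _)).mul
      ((tendsto_one_sub_pow_sub_natFloor_sub hp hp0 (fun n => (hf n).le) hfp i).inv₀ one_ne_zero)
  have hsum : ∑ i ∈ range r,
      ((r - 1)! / i ! * 1 * (if r - 1 - i = 0 then 1 else 0) * 1⁻¹ : ℝ) = 1 := by
    rw [sum_eq_single (r - 1)]
    · simp [(r - 1).factorial_ne_zero]
    · intro i hi hne
      simp [show r - 1 - i ≠ 0 by simp at hi; omega]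
    · simp; omega
  refine (hsum ▸ tendsto_finsetSum _ hterm).congr' ?_
  filter_upwards [hM_ge, eventually_gt_atTop 0] with n hMr hn
  rw [one_sub_binomTail (M n) r (p n) (by omega), mul_sum, sum_div]
  refine sum_congr rfl fun i hi => (mul_binomialP_div_eq (mem_range.mp hi)
    ((mem_range.mp hi).trans_le hMr).le (natFloor_sub_le_self n (hf n).le) hn.ne'
    (hp n).1.ne' (by linarith [(hp n).2])).symm
end
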